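/- Let θ ∈ [0,1], and let k_i > 0, h_i > 0, R_i > 0, q_i ∈ ℝ, β_i ∈ ℝ (i = 1,…,m), b_1,…,b_m ∈ ℝ^d, f ∈ ℝ^d. A tuple (u, c_e, c_p, γ, Q, β') ∈ ℝ^d × ℝ^m × ℝ^m × ℝ^m × ℝ^m × ℝ^m satisfies: (a) c_{e,i} + c_{p,i} = b_iᵀu; (b) Q_i = q_i + k_i c_{e,i}; (c) β'_i = β_i + (1−θ) h_i c_{p,i}; (d) Σ_{i=1}^m Q_i b_i = f; (e) R_i + θ h_i γ_i ≥ |Q_i − β'_i|, γ_i ≥ |c_{p,i}|, and (R_i + θ h_i γ_i)·γ_i − (Q_i − β'_i)·c_{p,i} = 0, for all i; if and only if (u, c_e, c_p, γ) is a global optimal solution of the convex problem (Pκ): minimize Σ_i (q_i c_{e,i} + ½ k_i c_{e,i}²) + Σ_i [R_i γ_i + ½ θ h_i γ_i² + β_i c_{p,i} + ½ (1−θ) h_i c_{p,i}²] − fᵀu subject to c_{e,i} + c_{p,i} = b_iᵀu and γ_i ≥ |c_{p,i}| for all i, with Q and β' given by (b) and (c). -/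
import Mathlib

open Finset

private lemma aux_pos (c d : ℝ) (H : ∀ t : ℝ, 0 < t → t ≤ 1 → 0 ≤ c * t + d * t ^ 2) :
    0 ≤ c := by
  by_contra hc
  push_neg at hc
  set t : ℝ := min 1 (-c / (2 * (|d| + 1))) with ht
  have hd1 : (0:ℝ) < |d| + 1 := by positivity
  have hq : 0 < -c / (2 * (|d| + 1)) := div_pos (by linarith) (by positivity)
  have htpos : 0 < t := lt_min one_pos hq
  have ht1 : t ≤ 1 := min_le_left _ _
  have H' := H t htpos ht1
  have h2 : d * t ≤ |d| * t := mul_le_mul_of_nonneg_right (le_abs_self d) htpos.le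
  have h3 : |d| * t ≤ |d| * (-c / (2 * (|d| + 1))) :=
    mul_le_mul_of_nonneg_left (min_le_right _ _) (abs_nonneg d)
  have h4 : |d| * (-c / (2 * (|d| + 1))) ≤ -c / 2 := by
    rw [mul_div_assoc', div_le_div_iff₀ (by positivity) (by norm_num : (0:ℝ) < 2)]
    nlinarith [abs_nonneg d]
  have h5 : d * t ≤ -c / 2 := by linarith
  nlinarith [mul_le_mul_of_nonneg_left h5 htpos.le, mul_pos htpos (show (0:ℝ) < -c by linarith)]

private lemma aux_zero (c d : ℝ) (H : ∀ t : ℝ, |t| ≤ 1 → 0 ≤ c * t + d * t ^ 2) :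
    c = 0 := by
  have h1 : 0 ≤ c := aux_pos c d fun t ht0 ht1 => H t (abs_le.mpr ⟨by linarith, ht1⟩)
  have h2 : 0 ≤ -c := by
    refine aux_pos (-c) d fun t ht0 ht1 => ?_
    have := H (-t) (by rw [abs_neg]; exact abs_le.mpr ⟨by linarith, ht1⟩)
    nlinarith
  linarith

private lemma sum_apply_update {m : ℕ} (g : Fin m → ℝ → ℝ) (x : Fin m → ℝ) (i : Fin m) (v : ℝ) :
    ∑ i', g i' (Function.update x i v i')
      = g i v - g i (x i) + ∑ i', g i' (x i') := by
  have key : ∀ i', g i' (Function.update x i v i')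
      = (if i' = i then g i v - g i (x i) else 0) + g i' (x i') := by
    intro i'
    by_cases hii : i' = i
    · subst hii; simp
    · simp [Function.update_of_ne hii, hii]
  rw [Finset.sum_congr rfl fun i' _ => key i', Finset.sum_add_distrib,
    Finset.sum_ite_eq' Finset.univ i]
  simp

private lemma sum_apply_update2 {m : ℕ} (g : Fin m → ℝ → ℝ → ℝ) (x y : Fin m → ℝ)
    (i : Fin m) (v w : ℝ) :
    ∑ i', g i' (Function.update x i v i') (Function.update y i w i')
      = g i v w - g i (x i) (y i) + ∑ i', g i' (x i') (y i') := by
  have key : ∀ i', g i' (Function.update x i v i') (Function.update y i w i')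
      = (if i' = i then g i v w - g i (x i) (y i) else 0) + g i' (x i') (y i') := by
    intro i'
    by_cases hii : i' = i
    · subst hii; simp
    · simp [Function.update_of_ne hii, hii]
  rw [Finset.sum_congr rfl fun i' _ => key i', Finset.sum_add_distrib,
    Finset.sum_ite_eq' Finset.univ i]
  simp

/-- Feasibility for problem (Pκ) (same constraints as (P1)). -/
def PkFeasible (m d : ℕ) (b : Fin m → Fin d → ℝ)
    (u : Fin d → ℝ) (ce cp γ : Fin m → ℝ) : Prop :=
  (∀ i, ce i + cp i = ∑ j, b i j * u j) ∧ (∀ i, γ i ≥ |cp i|)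

/-- Objective of the mixed isotropic/kinematic hardening problem (Pκ). -/
noncomputable def PkObj (m d : ℕ) (θ : ℝ) (k h R q β : Fin m → ℝ) (f : Fin d → ℝ)
    (u : Fin d → ℝ) (ce cp γ : Fin m → ℝ) : ℝ :=
  (∑ i, (q i * ce i + (1/2) * k i * (ce i)^2))
    + (∑ i, (R i * γ i + (1/2) * (θ * h i) * (γ i)^2
        + β i * cp i + (1/2) * ((1 - θ) * h i) * (cp i)^2))
    - ∑ j, f j * u j

/-- the second-order cone complementarity system (a)–(e) of the
mixed isotropic/kinematic hardening incremental problem holds iff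
`(u, c_e, c_p, γ)` is a global optimal solution of (Pκ) and `Q`, `β'` are given
by the constitutive law and back-force evolution. -/
theorem mixed_hardening_soclcp_iff_optimal (m d : ℕ) (θ : ℝ)
    (hθ : θ ∈ Set.Icc (0 : ℝ) 1)
    (k h R q β : Fin m → ℝ)
    (hk : ∀ i, 0 < k i) (hh : ∀ i, 0 < h i) (hR : ∀ i, 0 < R i)
    (b : Fin m → Fin d → ℝ) (f : Fin d → ℝ)
    (u : Fin d → ℝ) (ce cp γ Q β' : Fin m → ℝ) :
    ((∀ i, ce i + cp i = ∑ j, b i j * u j)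
      ∧ (∀ i, Q i = q i + k i * ce i)
      ∧ (∀ i, β' i = β i + (1 - θ) * h i * cp i)
      ∧ (∀ j, ∑ i, Q i * b i j = f j)
      ∧ (∀ i, R i + θ * h i * γ i ≥ |Q i - β' i| ∧ γ i ≥ |cp i|
          ∧ (R i + θ * h i * γ i) * γ i - (Q i - β' i) * cp i = 0))
    ↔ ((PkFeasible m d b u ce cp γ ∧
          ∀ (u' : Fin d → ℝ) (ce' cp' γ' : Fin m → ℝ),
            PkFeasible m d b u' ce' cp' γ' →
            PkObj m d θ k h R q β f u ce cp γ
              ≤ PkObj m d θ k h R q β f u' ce' cp' γ')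
        ∧ (∀ i, Q i = q i + k i * ce i)
        ∧ (∀ i, β' i = β i + (1 - θ) * h i * cp i)) := by
  obtain ⟨hθ0, hθ1⟩ := hθ
  constructor
  · rintro ⟨ha, hQ, hβ', hd, he⟩
    refine ⟨⟨⟨ha, fun i => (he i).2.1⟩, ?_⟩, hQ, hβ'⟩
    rintro u' ce' cp' γ' ⟨ha', hγ'⟩
    have hfu : ∀ (v : Fin d → ℝ) (x y : Fin m → ℝ),
        (∀ i, x i + y i = ∑ j, b i j * v j) →
        ∑ j, f j * v j = ∑ i, Q i * (x i + y i) := by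
      intro v x y hv
      calc ∑ j, f j * v j = ∑ j, (∑ i, Q i * b i j) * v j :=
            Finset.sum_congr rfl fun j _ => by rw [hd j]
        _ = ∑ j, ∑ i, Q i * b i j * v j :=
            Finset.sum_congr rfl fun j _ => Finset.sum_mul ..
        _ = ∑ i, ∑ j, Q i * b i j * v j := Finset.sum_comm
        _ = ∑ i, Q i * (x i + y i) := Finset.sum_congr rfl fun i _ => by
            rw [hv i, Finset.mul_sum]
            exact Finset.sum_congr rfl fun j _ => (mul_assoc _ _ _)
    have key : ∀ i ∈ Finset.univ,
        (q i * ce i + (1/2) * k i * (ce i)^2)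
        + (R i * γ i + (1/2) * (θ * h i) * (γ i)^2
            + β i * cp i + (1/2) * ((1 - θ) * h i) * (cp i)^2)
        - Q i * (ce i + cp i)
        ≤ (q i * ce' i + (1/2) * k i * (ce' i)^2)
        + (R i * γ' i + (1/2) * (θ * h i) * (γ' i)^2
            + β i * cp' i + (1/2) * ((1 - θ) * h i) * (cp' i)^2)
        - Q i * (ce' i + cp' i) := by
      intro i _
      obtain ⟨h1, h2, h3⟩ := he i
      have hQβ : 0 ≤ R i + θ * h i * γ i := le_trans (abs_nonneg _) h1
      have hA : (Q i - β' i) * cp' i ≤ |Q i - β' i| * |cp' i| :=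
        le_trans (le_abs_self _) (abs_mul _ _).le
      have hB : |Q i - β' i| * |cp' i| ≤ (R i + θ * h i * γ i) * γ' i :=
        mul_le_mul h1 (hγ' i) (abs_nonneg _) hQβ
      have hq1 : Q i * (ce' i - ce i) = (q i + k i * ce i) * (ce' i - ce i) := by
        rw [hQ i]
      have hq2 : β' i * (cp' i - cp i)
          = (β i + (1 - θ) * h i * cp i) * (cp' i - cp i) := by
        rw [hβ' i]
      nlinarith [mul_nonneg (hk i).le (sq_nonneg (ce' i - ce i)),
        mul_nonneg (mul_nonneg hθ0 (hh i).le) (sq_nonneg (γ' i - γ i)),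
        mul_nonneg (mul_nonneg (by linarith : (0:ℝ) ≤ 1 - θ) (hh i).le)
          (sq_nonneg (cp' i - cp i)),
        hq1, hq2, h3, hA, hB]
    have hsum := Finset.sum_le_sum key
    simp only [Finset.sum_sub_distrib, Finset.sum_add_distrib] at hsum
    unfold PkObj
    rw [hfu u ce cp ha, hfu u' ce' cp' ha']
    simp only [Finset.sum_add_distrib]
    linarith [hsum]
  · rintro ⟨⟨⟨ha, hγfeas⟩, hopt⟩, hQ, hβ'⟩
    refine ⟨ha, hQ, hβ', ?_, ?_⟩
    · -- force balance
      intro j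
      have main : ∀ t : ℝ, 0 ≤ ((∑ i, Q i * b i j) - f j) * t
          + (∑ i, (1/2) * k i * (b i j)^2) * t^2 := by
        intro t
        set u' : Fin d → ℝ := fun l => if l = j then u l + t else u l with hu'
        set ce' : Fin m → ℝ := fun i => ce i + t * b i j with hce'
        have hbu' : ∀ i, ∑ l, b i l * u' l = (∑ l, b i l * u l) + b i j * t := by
          intro i
          have step : ∀ l, b i l * u' l
              = b i l * u l + (if l = j then b i l * t else 0) := by
            intro l
            by_cases hl : l = j
            · subst hl; simp [hu']; ring
            · simp [hu', hl]
          rw [Finset.sum_congr rfl fun l _ => step l, Finset.sum_add_distrib,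
            Finset.sum_ite_eq' Finset.univ j]
          simp
        have hfeas' : PkFeasible m d b u' ce' cp γ := by
          refine ⟨fun i => ?_, hγfeas⟩
          rw [hbu' i, ← ha i]
          simp only [hce']
          ring
        have hle := hopt u' ce' cp γ hfeas'
        have hsum1 : ∑ i, (q i * ce' i + (1/2) * k i * (ce' i)^2)
            = (∑ i, (q i * ce i + (1/2) * k i * (ce i)^2))
              + (∑ i, (q i + k i * ce i) * b i j) * t
              + (∑ i, (1/2) * k i * (b i j)^2) * t^2 := by
          rw [Finset.sum_mul, Finset.sum_mul, ← Finset.sum_add_distrib,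
            ← Finset.sum_add_distrib]
          refine Finset.sum_congr rfl fun i _ => ?_
          simp only [hce']
          ring
        have hsumf : ∑ l, f l * u' l = (∑ l, f l * u l) + f j * t := by
          have step : ∀ l, f l * u' l = f l * u l + (if l = j then f l * t else 0) := by
            intro l
            by_cases hl : l = j
            · subst hl; simp [hu']; ring
            · simp [hu', hl]
          rw [Finset.sum_congr rfl fun l _ => step l, Finset.sum_add_distrib,
            Finset.sum_ite_eq' Finset.univ j]
          simp
        have hQsum : ∑ i, (q i + k i * ce i) * b i j = ∑ i, Q i * b i j :=
          Finset.sum_congr rfl fun i _ => by rw [← hQ i]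
        unfold PkObj at hle
        rw [hsum1, hsumf, hQsum] at hle
        linarith
      have h0 := aux_zero _ _ (fun t _ => main t)
      linarith [h0]
    · -- complementarity conditions
      intro i
      have master : ∀ s t : ℝ, γ i + t ≥ |cp i + s| →
          0 ≤ (β' i - Q i) * s + (R i + θ * h i * γ i) * t
            + ((1/2) * k i + (1/2) * ((1 - θ) * h i)) * s^2
            + (1/2) * (θ * h i) * t^2 := by
        intro s t hfeasit
        set ce' := Function.update ce i (ce i - s) with hce'
        set cp' := Function.update cp i (cp i + s) with hcp'
        set γ'' := Function.update γ i (γ i + t) with hγ''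
        have hfeas' : PkFeasible m d b u ce' cp' γ'' := by
          constructor
          · intro i'
            by_cases hii : i' = i
            · subst hii
              simp only [hce', hcp', Function.update_self]
              have := ha i'
              linarith
            · simp only [hce', hcp', Function.update_of_ne hii]
              exact ha i'
          · intro i'
            by_cases hii : i' = i
            · subst hii
              simp only [hcp', hγ'', Function.update_self]
              exact hfeasit
            · simp only [hcp', hγ'', Function.update_of_ne hii]
              exact hγfeas i'
        have hle := hopt u ce' cp' γ'' hfeas'
        unfold PkObj at hle
        rw [hce', hcp', hγ''] at hle
        rw [sum_apply_update (fun i' x => q i' * x + (1/2) * k i' * x^2) ce i (ce i - s)] at hle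
        rw [sum_apply_update2
          (fun i' a c => R i' * a + (1/2) * (θ * h i') * a^2
            + β i' * c + (1/2) * ((1 - θ) * h i') * c^2) γ cp i (γ i + t) (cp i + s)] at hle
        have hq1 : (β' i - Q i) * s
            = (β i + (1 - θ) * h i * cp i - (q i + k i * ce i)) * s := by
          rw [hQ i, hβ' i]
        linarith [hle, hq1]
      refine ⟨?_, hγfeas i, ?_⟩
      · -- the cone inequality
        have h0 : 0 ≤ R i + θ * h i * γ i - |Q i - β' i| := by
          set ε : ℝ := if 0 ≤ Q i - β' i then 1 else -1 with hε
          have hεabs : |ε| = 1 := by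
            by_cases hc : 0 ≤ Q i - β' i <;> simp [hε, hc]
          have hεmul : (Q i - β' i) * ε = |Q i - β' i| := by
            by_cases hc : 0 ≤ Q i - β' i
            · simp [hε, hc, abs_of_nonneg hc]
            · push_neg at hc
              rw [hε, if_neg (not_le.mpr hc), abs_of_neg hc]
              ring
          apply aux_pos _ (((1/2) * k i + (1/2) * ((1 - θ) * h i)) * ε^2 + (1/2) * (θ * h i))
          intro t ht0 ht1
          have hfe : γ i + t ≥ |cp i + t * ε| := by
            calc |cp i + t * ε| ≤ |cp i| + |t * ε| := abs_add_le _ _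
              _ = |cp i| + t := by rw [abs_mul, hεabs, abs_of_pos ht0]; ring
              _ ≤ γ i + t := by linarith [hγfeas i]
          have hm := master (t * ε) t hfe
          have h5 : (β' i - Q i) * (t * ε) = -(|Q i - β' i| * t) := by
            rw [← hεmul]; ring
          linarith [hm, h5]
        linarith [abs_nonneg (Q i - β' i), h0]
      · -- complementarity equality
        apply aux_zero _ (((1/2) * k i + (1/2) * ((1 - θ) * h i)) * (cp i)^2
          + (1/2) * (θ * h i) * (γ i)^2)
        intro t ht
        have h1t : 0 ≤ 1 + t := by
          have := abs_le.mp ht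
          linarith [this.1]
        have hfe : γ i + t * γ i ≥ |cp i + t * cp i| := by
          have habs : |cp i + t * cp i| = (1 + t) * |cp i| := by
            rw [show cp i + t * cp i = (1 + t) * cp i by ring, abs_mul, abs_of_nonneg h1t]
          rw [habs]
          have hgi := hγfeas i
          nlinarith [abs_nonneg (cp i)]
        have hm := master (t * cp i) (t * γ i) hfe
        linarith [hm]
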